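/- arXiv:2305.04016 — 2 statements merged into one kernel-verified Lean document; each statement's English description precedes it below -/
import Mathlib

section
/- Let n ≥ 2, s ∈ (0,1), and let φ be a Young function with doubling constant K_φ < 2^{n/s}. Define H(t) = (∫₀ᵗ (τ/φ(τ))^{s/(n-s)} dτ)^{(n-s)/n}. Then there exists a constant C, depending only on n, s and K_φ, such that H(A)/A ≤ C · φ(A)^{-s/n} for all A > 0. -/
/-!
Iterating the doubling condition gives the power-type lower bound
`φ A ≤ K (A / τ) ^ β φ τ` for `0 < τ ≤ A`, with `β = log₂ K`. Hence the integrand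
`(τ / φ τ) ^ p`, `p = s / (n - s)`, is dominated on `(0, A)` by
`(K A ^ β / φ A) ^ p τ ^ ((1 - β) p)`. The hypothesis `K < 2 ^ (n / s)` says precisely that
this power of `τ` is integrable at `0`, and integrating it yields
`∫₀ᴬ (τ / φ τ) ^ p ≤ C A ^ (p + 1) / φ A ^ p`, which is the claim after raising to the power
`(n - s) / n`.
-/

open Filter MeasureTheory Set Real

lemma integral_Ioo_rpow {r A : ℝ} (hr : -1 < r) (hA : 0 ≤ A) :
    ∫ τ in Ioo 0 A, τ ^ r = A ^ (r + 1) / (r + 1) := by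
  rw [← integral_Ioc_eq_integral_Ioo, ← intervalIntegral.integral_of_le hA,
    integral_rpow (Or.inl hr), zero_rpow (by linarith), sub_zero]

lemma monotoneOn_Ioi_of_convexOn_of_map_zero {φ : ℝ → ℝ} (hconv : ConvexOn ℝ (Ici 0) φ)
    (h0 : φ 0 = 0) (hpos : ∀ t > 0, 0 < φ t) : MonotoneOn φ (Ioi 0) :=
  fun a ha b _ hab ↦ hconv.le_right_of_left_le'' self_mem_Ici
    (mem_Ici.2 (ha.out.trans_le hab).le) ha hab (by rw [h0]; exact (hpos a ha).le)

section Doubling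

variable {φ : ℝ → ℝ} {K : ℝ}

lemma one_le_of_doubling (hmono : MonotoneOn φ (Ioi 0)) (hpos : ∀ t > 0, 0 < φ t)
    (hK : ∀ t > 0, φ (2 * t) ≤ K * φ t) : 1 ≤ K := by
  have h12 : φ 1 ≤ φ 2 := hmono (mem_Ioi.2 one_pos) (mem_Ioi.2 two_pos) one_le_two
  have h2 : φ (2 * 1) ≤ K * φ 1 := hK 1 one_pos
  rw [mul_one] at h2
  nlinarith [hpos 1 one_pos]

lemma map_two_pow_mul_le_of_doubling (hK0 : 0 ≤ K) (hK : ∀ t > 0, φ (2 * t) ≤ K * φ t)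
    {t : ℝ} (ht : 0 < t) (m : ℕ) : φ (2 ^ m * t) ≤ K ^ m * φ t := by
  induction m with
  | zero => simp
  | succ m ih =>
    calc φ (2 ^ (m + 1) * t) = φ (2 * (2 ^ m * t)) := by ring_nf
      _ ≤ K * φ (2 ^ m * t) := hK _ (by positivity)
      _ ≤ K * (K ^ m * φ t) := mul_le_mul_of_nonneg_left ih hK0
      _ = K ^ (m + 1) * φ t := by ring

lemma le_mul_rpow_logb_mul_of_doubling (hmono : MonotoneOn φ (Ioi 0))
    (hpos : ∀ t > 0, 0 < φ t) (hK : ∀ t > 0, φ (2 * t) ≤ K * φ t) (hK1 : 1 ≤ K)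
    {τ A : ℝ} (hτ : 0 < τ) (hτA : τ ≤ A) : φ A ≤ K * (A / τ) ^ logb 2 K * φ τ := by
  obtain ⟨m, hm, hm'⟩ := exists_nat_pow_near ((one_le_div hτ).2 hτA) one_lt_two
  have hKm : K ^ m ≤ (A / τ) ^ logb 2 K := by
    calc K ^ m = ((2 : ℝ) ^ m) ^ logb 2 K := by
          rw [← rpow_natCast 2 m, ← rpow_mul zero_le_two, mul_comm, rpow_mul zero_le_two,
            rpow_natCast, rpow_logb two_pos (by norm_num) (by linarith)]
      _ ≤ (A / τ) ^ logb 2 K := rpow_le_rpow (by positivity) hm (logb_nonneg one_lt_two hK1)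
  have hA : A ≤ 2 ^ (m + 1) * τ := ((div_lt_iff₀ hτ).1 hm').le
  calc φ A ≤ φ (2 ^ (m + 1) * τ) :=
        hmono (mem_Ioi.2 (hτ.trans_le hτA)) (mem_Ioi.2 (by positivity)) hA
    _ ≤ K ^ (m + 1) * φ τ := map_two_pow_mul_le_of_doubling (by linarith) hK hτ _
    _ = K * K ^ m * φ τ := by ring
    _ ≤ K * (A / τ) ^ logb 2 K * φ τ := by gcongr; exact (hpos τ hτ).le

lemma integral_rpow_div_le_of_doubling (hmono : MonotoneOn φ (Ioi 0))
    (hpos : ∀ t > 0, 0 < φ t) (hK : ∀ t > 0, φ (2 * t) ≤ K * φ t) (hK1 : 1 ≤ K)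
    {p : ℝ} (hp : 0 < p) (hKp : logb 2 K * p < p + 1) {A : ℝ} (hA : 0 < A) :
    ∫ τ in Ioo 0 A, (τ / φ τ) ^ p ≤
      K ^ p / (p + 1 - logb 2 K * p) * (A ^ (p + 1) / φ A ^ p) := by
  set β := logb 2 K
  set c := (K * A ^ β / φ A) ^ p with hc
  have hφA := hpos A hA
  have hr : -1 < (1 - β) * p := by linarith
  have hbound : ∀ τ ∈ Ioo 0 A, (τ / φ τ) ^ p ≤ c * τ ^ ((1 - β) * p) := by
    rintro τ ⟨hτ, hτA⟩
    have hφτ := hpos τ hτ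
    have hle : τ / φ τ ≤ K * A ^ β / φ A * τ ^ (1 - β) := by
      have := le_mul_rpow_logb_mul_of_doubling hmono hpos hK hK1 hτ hτA.le
      rw [div_rpow hA.le hτ.le] at this
      rw [rpow_sub hτ, rpow_one, div_le_iff₀ hφτ]
      calc τ = τ / φ A * φ A := by field_simp
        _ ≤ τ / φ A * (K * (A ^ β / τ ^ β) * φ τ) := by gcongr
        _ = K * A ^ β / φ A * (τ / τ ^ β) * φ τ := by ring
    calc (τ / φ τ) ^ p ≤ (K * A ^ β / φ A * τ ^ (1 - β)) ^ p := by gcongr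
      _ = c * τ ^ ((1 - β) * p) := by
        rw [mul_rpow (by positivity) (by positivity), ← rpow_mul hτ.le]
  calc ∫ τ in Ioo 0 A, (τ / φ τ) ^ p ≤ ∫ τ in Ioo 0 A, c * τ ^ ((1 - β) * p) := by
        refine integral_mono_of_nonneg ?_ ?_ ?_
        · exact (ae_restrict_mem measurableSet_Ioo).mono fun τ hτ ↦
            rpow_nonneg (div_nonneg hτ.1.le (hpos τ hτ.1).le) p
        · exact ((intervalIntegral.integrableOn_Ioo_rpow_iff hA).2 hr).const_mul c
        · exact (ae_restrict_mem measurableSet_Ioo).mono hbound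
    _ = c * (A ^ ((1 - β) * p + 1) / ((1 - β) * p + 1)) := by
        rw [integral_const_mul, integral_Ioo_rpow hr hA.le]
    _ = K ^ p / (p + 1 - β * p) * (A ^ (p + 1) / φ A ^ p) := by
        have hA_pow : A ^ (p + 1) = A ^ (β * p) * A ^ (p + 1 - β * p) := by
          rw [← rpow_add hA]; ring_nf
        rw [hA_pow, show (1 - β) * p + 1 = p + 1 - β * p by ring, hc,
          div_rpow (by positivity) hφA.le, mul_rpow (by linarith) (by positivity),
          ← rpow_mul hA.le]
        ring

end Doubling

theorem H_over_A_bound_general (n : ℕ) (hn : 2 ≤ n) (s : ℝ) (hs : s ∈ Set.Ioo (0:ℝ) 1)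
    (φ : ℝ → ℝ)
    (hconv : ConvexOn ℝ (Set.Ici 0) φ)
    (h0 : φ 0 = 0) (hpos : ∀ t > 0, 0 < φ t)
    (K : ℝ) (hK : ∀ t > 0, φ (2 * t) ≤ K * φ t) (hKlt : K < 2 ^ ((n : ℝ) / s))
    (H : ℝ → ℝ)
    (hH : ∀ t, H t = (∫ τ in Set.Ioo (0:ℝ) t, (τ / φ τ) ^ (s / ((n : ℝ) - s))) ^ (((n : ℝ) - s) / n)) :
    ∃ C > 0, ∀ A > 0, H A / A ≤ C * φ A ^ (-(s / (n : ℝ))) := by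
  obtain ⟨hs0, hs1⟩ := hs
  have hns : s < n := by linarith [show (2 : ℝ) ≤ n by exact_mod_cast hn]
  have hns₀ : (n : ℝ) - s ≠ 0 := sub_ne_zero.2 hns.ne'
  have hn₀ : (n : ℝ) ≠ 0 := by linarith
  set p := s / ((n : ℝ) - s) with hp_def
  set q := ((n : ℝ) - s) / n with hq_def
  have hp : 0 < p := div_pos hs0 (sub_pos.2 hns)
  have hmono := monotoneOn_Ioi_of_convexOn_of_map_zero hconv h0 hpos
  have hK1 := one_le_of_doubling hmono hpos hK
  -- `K < 2 ^ (n / s)` is exactly `logb 2 K < (p + 1) / p`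
  have hKp : logb 2 K * p < p + 1 := by
    have := (logb_lt_iff_lt_rpow one_lt_two (by linarith)).2 hKlt
    calc logb 2 K * p < n / s * p := by gcongr
      _ = p + 1 := by rw [hp_def]; field_simp; ring
  set C₀ := K ^ p / (p + 1 - logb 2 K * p)
  have hC₀ : 0 < C₀ := div_pos (by positivity) (by linarith)
  refine ⟨C₀ ^ q, by positivity, fun A hA ↦ ?_⟩
  have hφA := hpos A hA
  have hI_nonneg : 0 ≤ ∫ τ in Ioo 0 A, (τ / φ τ) ^ p :=
    setIntegral_nonneg measurableSet_Ioo fun τ hτ ↦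
      rpow_nonneg (div_nonneg hτ.1.le (hpos τ hτ.1).le) p
  rw [hH, div_le_iff₀ hA]
  calc (∫ τ in Ioo 0 A, (τ / φ τ) ^ p) ^ q ≤ (C₀ * (A ^ (p + 1) / φ A ^ p)) ^ q :=
        rpow_le_rpow hI_nonneg
          (integral_rpow_div_le_of_doubling hmono hpos hK hK1 hp hKp hA) (by positivity)
    _ = C₀ ^ q * φ A ^ (-(s / n)) * A := by
        have hpq : p * q = s / n := by rw [hp_def, hq_def]; field_simp
        have hp1q : (p + 1) * q = 1 := by rw [hp_def, hq_def]; field_simp; ring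
        rw [mul_rpow hC₀.le (by positivity),
          div_rpow (rpow_nonneg hA.le (p + 1)) (rpow_nonneg hφA.le p),
          ← rpow_mul hA.le, ← rpow_mul hφA.le, hpq, hp1q, rpow_one, rpow_neg hφA.le]
        ring

/-- If φ is a Young function with doubling constant `K < 2^{n/s}` and
`H(t) = (∫₀ᵗ (τ/φ(τ))^{s/(n-s)} dτ)^{(n-s)/n}`, then there is `C = C(n,s,K)` with
`H(A)/A ≤ C φ(A)^{-s/n}` for all `A > 0`. -/
theorem H_over_A_bound (n : ℕ) (hn : 2 ≤ n) (s : ℝ) (hs : s ∈ Set.Ioo (0:ℝ) 1)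
    (φ : ℝ → ℝ)
    (hconv : ConvexOn ℝ (Set.Ici 0) φ) (hcont : Continuous φ)
    (h0 : φ 0 = 0) (hpos : ∀ t > 0, 0 < φ t)
    (htop : Tendsto φ atTop atTop)
    (K : ℝ) (hK : ∀ t > 0, φ (2 * t) ≤ K * φ t) (hKlt : K < 2 ^ ((n : ℝ) / s))
    (H : ℝ → ℝ)
    (hH : ∀ t, H t = (∫ τ in Set.Ioo (0:ℝ) t, (τ / φ τ) ^ (s / ((n : ℝ) - s))) ^ (((n : ℝ) - s) / n)) :
    ∃ C > 0, ∀ A > 0, H A / A ≤ C * φ A ^ (-(s / (n : ℝ))) :=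
  H_over_A_bound_general n hn s hs φ hconv h0 hpos K hK hKlt H hH
end

section
/- Let n ≥ 2, s ∈ (0,1), and let φ be a Young function with doubling constant K_φ < 2^{n/s}. Define H(t) = (∫₀ᵗ (τ/φ(τ))^{s/(n-s)} dτ)^{(n-s)/n} and the Sobolev conjugate φ_{n/s} := φ ∘ H^{-1}. Then φ_{n/s} satisfies the Δ₂ doubling condition: sup_{t>0} φ_{n/s}(2t)/φ_{n/s}(t) < ∞. -/
/-!
Write `f τ = (τ / φ τ)^p` with `p = s / (n - s)` and `H = G^e` with `G t = ∫₀ᵗ f` and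
`e = (n - s) / n`. Doubling of `φ` gives `f (2σ) ≥ (2/K)^p f σ`, so substituting `τ = 2σ` yields
`H (2u) ≥ c H u` with `c = (2 (2/K)^p)^e`, and `c > 1` is exactly the condition `K < 2^{n/s}`.
Choosing `c^m ≥ 2` gives `H (2^m x) ≥ 2 H x`, i.e. `H⁻¹ (2t) ≤ 2^m H⁻¹ t`, and then the
doubling of `φ`, applied `m` times, bounds `φ (H⁻¹ (2t)) / φ (H⁻¹ t)` by `K^m`.
-/

open Filter MeasureTheory Set

theorem ConvexOn.monotoneOn_Ici_of_isMinOn {φ : ℝ → ℝ} {a : ℝ} (hφ : ConvexOn ℝ (Ici a) φ)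
    (hmin : IsMinOn φ (Ici a) a) : MonotoneOn φ (Ici a) := by
  intro x hx y hy hxy
  rcases (mem_Ici.1 hx).eq_or_lt with rfl | hax
  · exact hmin hy
  · exact hφ.le_right_of_left_le'' self_mem_Ici hy hax hxy (hmin hx)

theorem comp_two_pow_mul_le_pow_mul {F : ℝ → ℝ} {K : ℝ} (hK : 0 ≤ K)
    (hF : ∀ t > 0, F (2 * t) ≤ K * F t) (m : ℕ) {x : ℝ} (hx : 0 < x) :
    F (2 ^ m * x) ≤ K ^ m * F x := by
  induction m with
  | zero => simp
  | succ m ih =>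
    calc F (2 ^ (m + 1) * x) = F (2 * (2 ^ m * x)) := by ring_nf
      _ ≤ K * F (2 ^ m * x) := hF _ (by positivity)
      _ ≤ K * (K ^ m * F x) := by gcongr
      _ = K ^ (m + 1) * F x := by ring

theorem div_le_pow_of_le_two_pow_mul {φ : ℝ → ℝ} {K : ℝ} (hφ : MonotoneOn φ (Ici 0))
    (hK0 : 0 ≤ K) (hK : ∀ t > 0, φ (2 * t) ≤ K * φ t) (hpos : ∀ t > 0, 0 < φ t) {m : ℕ}
    {x y : ℝ} (hx : 0 < x) (hy : 0 ≤ y) (hyx : y ≤ 2 ^ m * x) : φ y / φ x ≤ K ^ m := by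
  rw [div_le_iff₀ (hpos x hx)]
  calc φ y ≤ φ (2 ^ m * x) := hφ hy (mem_Ici.2 (by positivity)) hyx
    _ ≤ K ^ m * φ x := comp_two_pow_mul_le_pow_mul hK0 hK m hx

theorem rpow_mul_rpow_div_le_of_doubling {φ : ℝ → ℝ} {K p σ : ℝ} (hp : 0 ≤ p) (hσ : 0 < σ)
    (hφσ : 0 < φ σ) (hφ2σ : 0 < φ (2 * σ)) (hK : φ (2 * σ) ≤ K * φ σ) :
    (2 / K) ^ p * (σ / φ σ) ^ p ≤ (2 * σ / φ (2 * σ)) ^ p := by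
  have hK0 : 0 < K := pos_of_mul_pos_left (hφ2σ.trans_le hK) hφσ.le
  rw [← Real.mul_rpow (by positivity) (by positivity), div_mul_div_comm]
  gcongr

theorem one_lt_two_mul_two_div_rpow {n s K : ℝ} (hs : 0 < s) (hsn : s < n) (hK : 0 < K)
    (hKlt : K < 2 ^ (n / s)) : 1 < 2 * (2 / K) ^ (s / (n - s)) := by
  have hns : 0 < n - s := by linarith
  have hKp : K ^ (s / (n - s)) < 2 * 2 ^ (s / (n - s)) :=
    calc K ^ (s / (n - s)) < (2 ^ (n / s)) ^ (s / (n - s)) := by gcongr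
      _ = 2 ^ (1 + s / (n - s)) := by
          rw [← Real.rpow_mul zero_le_two]; congr 1; field_simp; ring
      _ = 2 * 2 ^ (s / (n - s)) := by rw [Real.rpow_add two_pos, Real.rpow_one]
  rw [Real.div_rpow zero_le_two hK.le, mul_div_assoc', lt_div_iff₀ (by positivity), one_mul]
  exact hKp

theorem two_mul_mul_integral_le_integral_two_mul {g : ℝ → ℝ} {a u : ℝ} (hu : 0 ≤ u)
    (hg : IntegrableOn g (Ioo 0 (2 * u))) (hga : ∀ σ ∈ Ioo 0 u, a * g σ ≤ g (2 * σ)) :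
    2 * a * ∫ σ in Ioo 0 u, g σ ≤ ∫ τ in Ioo 0 (2 * u), g τ := by
  have hu2 : 0 ≤ 2 * u := by positivity
  have hg₂ : IntervalIntegrable g volume 0 (2 * u) :=
    (intervalIntegrable_iff_integrableOn_Ioo_of_le hu2).2 hg
  have hg₁ : IntervalIntegrable g volume 0 u :=
    hg₂.mono_set (by rw [uIcc_of_le hu, uIcc_of_le hu2]; exact Icc_subset_Icc_right (by linarith))
  have hg_two_mul : IntervalIntegrable (fun σ => g (2 * σ)) volume 0 u := by
    simpa using hg₂.comp_mul_left (c := 2)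
  have hIoo : ∀ t, 0 ≤ t → ∫ τ in Ioo 0 t, g τ = ∫ τ in 0..t, g τ := fun t ht => by
    rw [intervalIntegral.integral_of_le ht, integral_Ioc_eq_integral_Ioo]
  rw [hIoo u hu, hIoo _ hu2]
  calc 2 * a * ∫ σ in 0..u, g σ = 2 * ∫ σ in 0..u, a * g σ := by
        rw [intervalIntegral.integral_const_mul]; ring
    _ ≤ 2 * ∫ σ in 0..u, g (2 * σ) := by
        gcongr
        exact intervalIntegral.integral_mono_on_of_le_Ioo hu (hg₁.const_mul a) hg_two_mul hga
    _ = ∫ τ in 0..2 * u, g τ := by simp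

/-- The paper's `H` is the case `g τ = (τ / φ τ) ^ (s / (n - s))`, `e = (n - s) / n`. -/
noncomputable def powIntegral (g : ℝ → ℝ) (e t : ℝ) : ℝ := (∫ τ in Ioo 0 t, g τ) ^ e

section powIntegral

variable {g : ℝ → ℝ} {e : ℝ}

theorem powIntegral_zero (he : e ≠ 0) : powIntegral g e 0 = 0 := by
  simp [powIntegral, Real.zero_rpow he]

/-- A non-integrable `g` on `(0, t)` would give the junk value `powIntegral g e t = 0`. -/
theorem integrableOn_Ioo_of_injOn_powIntegral (he : e ≠ 0)
    (hinj : InjOn (powIntegral g e) (Ici 0)) {t : ℝ} (ht : 0 < t) : IntegrableOn g (Ioo 0 t) :=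
  Integrable.of_integral_ne_zero fun hzero => ht.ne' <| hinj ht.le self_mem_Ici <| by
    rw [powIntegral_zero he, powIntegral, hzero, Real.zero_rpow he]

theorem monotoneOn_powIntegral (he : 0 ≤ e) (hg : ∀ τ > 0, 0 ≤ g τ)
    (hint : ∀ t > 0, IntegrableOn g (Ioo 0 t)) : MonotoneOn (powIntegral g e) (Ici 0) := by
  have hg' : ∀ t, 0 ≤ᵐ[volume.restrict (Ioo 0 t)] g := fun t =>
    (ae_restrict_iff' measurableSet_Ioo).2 (ae_of_all _ fun τ hτ => hg τ hτ.1)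
  intro a ha b hb hab
  rcases (mem_Ici.1 hb).eq_or_lt with rfl | hb
  · rw [le_antisymm hab ha]
  · exact Real.rpow_le_rpow (integral_nonneg_of_ae (hg' a))
      (setIntegral_mono_set (hint b hb) (hg' b) (Ioo_subset_Ioo_right hab).eventuallyLE) he

theorem strictMonoOn_powIntegral (he : 0 < e) (hg : ∀ τ > 0, 0 ≤ g τ)
    (hinj : InjOn (powIntegral g e) (Ici 0)) : StrictMonoOn (powIntegral g e) (Ici 0) :=
  (monotoneOn_powIntegral he.le hg fun _ ht =>
    integrableOn_Ioo_of_injOn_powIntegral he.ne' hinj ht).strictMonoOn_of_injOn hinj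

theorem mul_powIntegral_le_powIntegral_two_mul {a u : ℝ} (ha : 0 ≤ a) (he : 0 ≤ e)
    (hg : ∀ τ > 0, 0 ≤ g τ) (hu : 0 ≤ u) (hint : IntegrableOn g (Ioo 0 (2 * u)))
    (hga : ∀ σ ∈ Ioo 0 u, a * g σ ≤ g (2 * σ)) :
    (2 * a) ^ e * powIntegral g e u ≤ powIntegral g e (2 * u) := by
  have hG : 0 ≤ ∫ τ in Ioo 0 u, g τ := setIntegral_nonneg measurableSet_Ioo fun τ hτ => hg τ hτ.1
  rw [powIntegral, powIntegral, ← Real.mul_rpow (by positivity) hG]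
  exact Real.rpow_le_rpow (by positivity) (two_mul_mul_integral_le_integral_two_mul hu hint hga) he

end powIntegral

theorem pow_mul_le_comp_two_pow_mul {F : ℝ → ℝ} {c : ℝ} (hc : 0 ≤ c)
    (hF : ∀ u > 0, c * F u ≤ F (2 * u)) (m : ℕ) {x : ℝ} (hx : 0 < x) :
    c ^ m * F x ≤ F (2 ^ m * x) := by
  induction m with
  | zero => simp
  | succ m ih =>
    calc c ^ (m + 1) * F x = c * (c ^ m * F x) := by ring
      _ ≤ c * F (2 ^ m * x) := by gcongr
      _ ≤ F (2 * (2 ^ m * x)) := hF _ (by positivity)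
      _ = F (2 ^ (m + 1) * x) := by ring_nf

theorem exists_forall_inv_two_mul_le_two_pow_mul {H Hinv : ℝ → ℝ} {c : ℝ} (hc : 1 < c)
    (hH : StrictMonoOn H (Ici 0)) (hHinv : ∀ t > 0, H (Hinv t) = t ∧ 0 < Hinv t)
    (hdouble : ∀ u > 0, c * H u ≤ H (2 * u)) :
    ∃ m : ℕ, ∀ t > 0, Hinv (2 * t) ≤ 2 ^ m * Hinv t := by
  obtain ⟨m, hm⟩ := pow_unbounded_of_one_lt (2 : ℝ) hc
  refine ⟨m, fun t ht => ?_⟩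
  obtain ⟨hHt, hx⟩ := hHinv t ht
  obtain ⟨hH2t, hx2⟩ := hHinv (2 * t) (by positivity)
  have h : H (Hinv (2 * t)) ≤ H (2 ^ m * Hinv t) :=
    calc H (Hinv (2 * t)) = 2 * H (Hinv t) := by rw [hH2t, hHt]
      _ ≤ c ^ m * H (Hinv t) := by rw [hHt]; gcongr
      _ ≤ H (2 ^ m * Hinv t) := pow_mul_le_comp_two_pow_mul (by positivity) hdouble m hx
  exact (hH.le_iff_le (mem_Ici.2 hx2.le) (mem_Ici.2 (by positivity))).1 h

theorem sobolev_conjugate_delta2_general (n : ℕ) (hn : 2 ≤ n) (s : ℝ) (hs : s ∈ Set.Ioo (0:ℝ) 1)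
    (φ : ℝ → ℝ)
    (hconv : ConvexOn ℝ (Set.Ici 0) φ)
    (h0 : φ 0 = 0) (hpos : ∀ t > 0, 0 < φ t)
    (K : ℝ) (hK : ∀ t > 0, φ (2 * t) ≤ K * φ t) (hKlt : K < 2 ^ ((n : ℝ) / s))
    (H : ℝ → ℝ)
    (hH : ∀ t, H t = (∫ τ in Set.Ioo (0:ℝ) t, (τ / φ τ) ^ (s / ((n : ℝ) - s))) ^ (((n : ℝ) - s) / n))
    (Hinv : ℝ → ℝ)
    (hHinv : ∀ t ≥ (0:ℝ), H (Hinv t) = t ∧ Hinv (H t) = t ∧ 0 ≤ Hinv t) :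
    ∃ C : ℝ, ∀ t > 0, (φ ∘ Hinv) (2 * t) / (φ ∘ Hinv) t ≤ C := by
  obtain ⟨hs0, hs1⟩ := hs
  have hsn : s < n := by
    have : (2 : ℝ) ≤ n := by exact_mod_cast hn
    linarith
  set p := s / ((n : ℝ) - s)
  set e := ((n : ℝ) - s) / n
  have he : 0 < e := div_pos (by linarith) (by linarith)
  have hK0 : 0 < K := pos_of_mul_pos_left ((hpos _ two_pos).trans_le (by simpa using hK 1 one_pos))
    (hpos 1 one_pos).le
  have hφ : MonotoneOn φ (Ici 0) := hconv.monotoneOn_Ici_of_isMinOn <| isMinOn_iff.2 fun t ht => by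
    rcases (mem_Ici.1 ht).eq_or_lt with rfl | ht
    exacts [le_rfl, h0.trans_le (hpos t ht).le]
  have hf : ∀ τ > 0, 0 ≤ (τ / φ τ) ^ p := fun τ hτ =>
    Real.rpow_nonneg (div_nonneg hτ.le (hpos τ hτ).le) _
  obtain rfl : H = powIntegral (fun τ => (τ / φ τ) ^ p) e := funext hH
  set H := powIntegral (fun τ => (τ / φ τ) ^ p) e
  have hinj : InjOn H (Ici 0) := fun a ha b hb hab => by
    rw [← (hHinv a ha).2.1, hab, (hHinv b hb).2.1]
  have hdouble : ∀ u > 0, (2 * (2 / K) ^ p) ^ e * H u ≤ H (2 * u) := fun u hu =>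
    mul_powIntegral_le_powIntegral_two_mul (by positivity) he.le hf hu.le
      (integrableOn_Ioo_of_injOn_powIntegral he.ne' hinj (by positivity)) fun σ hσ =>
        rpow_mul_rpow_div_le_of_doubling (div_nonneg hs0.le (by linarith)) hσ.1 (hpos σ hσ.1)
          (hpos _ (by linarith [hσ.1])) (hK σ hσ.1)
  have hHinv_pos : ∀ t > 0, H (Hinv t) = t ∧ 0 < Hinv t := fun t ht => by
    obtain ⟨hHt, -, hx⟩ := hHinv t ht.le
    refine ⟨hHt, hx.lt_of_ne fun hx0 => ht.ne ?_⟩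
    rw [← hHt, ← hx0]
    exact (powIntegral_zero he.ne').symm
  obtain ⟨m, hm⟩ := exists_forall_inv_two_mul_le_two_pow_mul
    (Real.one_lt_rpow (one_lt_two_mul_two_div_rpow hs0 hsn hK0 hKlt) he)
    (strictMonoOn_powIntegral he hf hinj) hHinv_pos hdouble
  exact ⟨K ^ m, fun t ht => div_le_pow_of_le_two_pow_mul hφ hK0.le hK hpos (hHinv_pos t ht).2
    (hHinv_pos _ (by positivity)).2.le (hm t ht)⟩

/-- If φ is a Young function with doubling constant `K < 2^{n/s}`, then the Sobolev
conjugate `φ_{n/s} = φ ∘ H⁻¹` satisfies the Δ₂ doubling condition. -/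
theorem sobolev_conjugate_delta2 (n : ℕ) (hn : 2 ≤ n) (s : ℝ) (hs : s ∈ Set.Ioo (0:ℝ) 1)
    (φ : ℝ → ℝ)
    (hconv : ConvexOn ℝ (Set.Ici 0) φ) (hcont : Continuous φ)
    (h0 : φ 0 = 0) (hpos : ∀ t > 0, 0 < φ t)
    (htop : Tendsto φ atTop atTop)
    (K : ℝ) (hK : ∀ t > 0, φ (2 * t) ≤ K * φ t) (hKlt : K < 2 ^ ((n : ℝ) / s))
    (H : ℝ → ℝ)
    (hH : ∀ t, H t = (∫ τ in Set.Ioo (0:ℝ) t, (τ / φ τ) ^ (s / ((n : ℝ) - s))) ^ (((n : ℝ) - s) / n))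
    (Hinv : ℝ → ℝ)
    (hHinv : ∀ t ≥ (0:ℝ), H (Hinv t) = t ∧ Hinv (H t) = t ∧ 0 ≤ Hinv t) :
    ∃ C : ℝ, ∀ t > 0, (φ ∘ Hinv) (2 * t) / (φ ∘ Hinv) t ≤ C :=
  sobolev_conjugate_delta2_general n hn s hs φ hconv h0 hpos K hK hKlt H hH Hinv hHinv
end
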